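/- arXiv:1704.03166 — 2 statements merged into one kernel-verified Lean document; each statement's English description precedes it below -/
import Mathlib

section
/- For any two nonzero scalars c₁, c₂ ∈ F_p, the element c₁·(βP^0 ⊗ P^0β) + c₂·(P^0β ⊗ βP^0) of the tensor product of F_p-vector spaces B(p) ⊗_{F_p} B(p) is nonzero. -/
open scoped TensorProduct

noncomputable section

namespace BpOps

/-- Generators of `B(p)`: the Bockstein `β` and the Steenrod powers `P^k`. -/
inductive Gen : Type
  | beta : Gen
  | pw : ℕ → Gen

abbrev F (p : ℕ) := ZMod p

/-- Binomial coefficient `C(m,n)` for integers, with the convention that it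
vanishes unless `0 ≤ n ≤ m`. -/
def binc (m n : ℤ) : ℤ := if 0 ≤ n ∧ n ≤ m then (m.toNat).choose n.toNat else 0

/-- The coefficient `A(k,r,j) = (-1)^(r+j) C((p-1)(k-j)-1, r-pj)` in `F_p`. -/
def Ac (p k r j : ℕ) : F p :=
  (((-1 : ℤ) ^ (r + j) *
      binc (((p : ℤ) - 1) * ((k : ℤ) - (j : ℤ)) - 1) ((r : ℤ) - (p : ℤ) * (j : ℤ))) : ℤ)

/-- The coefficient `B(k,r,j) = (-1)^(r+j) C((p-1)(k-j), r-pj)` in `F_p`. -/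
def Bc (p k r j : ℕ) : F p :=
  (((-1 : ℤ) ^ (r + j) *
      binc (((p : ℤ) - 1) * ((k : ℤ) - (j : ℤ))) ((r : ℤ) - (p : ℤ) * (j : ℤ))) : ℤ)

abbrev FA (p : ℕ) := FreeAlgebra (F p) Gen

def fβ (p : ℕ) : FA p := FreeAlgebra.ι (F p) Gen.beta
def fP (p : ℕ) (k : ℕ) : FA p := FreeAlgebra.ι (F p) (Gen.pw k)

/-- The defining relations (R1), (R2), (R3) of `B(p)`. -/
inductive BRel (p : ℕ) : FA p → FA p → Prop
  | betaSq : BRel p (fβ p * fβ p) 0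
  | adem (a b : ℕ) (h : a < p * b) :
      BRel p (fP p a * fP p b)
        (∑ t ∈ Finset.range (a / p + 1), Ac p b a t • (fP p (a + b - t) * fP p t))
  | ademBeta (a b : ℕ) (h : a ≤ p * b) :
      BRel p (fP p a * (fβ p * fP p b))
        (∑ t ∈ Finset.range (a / p + 1), Bc p b a t • (fβ p * (fP p (a + b - t) * fP p t))
          + ∑ t ∈ Finset.range (if a = 0 then 0 else (a - 1) / p + 1),
              Ac p b (a - 1) t • (fP p (a + b - t) * (fβ p * fP p t)))

/-- The algebra `B(p)` of operations for Hopf cohomology, presented by generators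
`β`, `P^k` and the relations (R1)-(R3). -/
abbrev BAlg (p : ℕ) := RingQuot (BRel p)

/-- The Bockstein `β` as an element of `B(p)`. -/
def gβ (p : ℕ) : BAlg p := RingQuot.mkAlgHom (F p) (BRel p) (fβ p)

/-- The Steenrod power `P^k` as an element of `B(p)`. -/
def gP (p : ℕ) (k : ℕ) : BAlg p := RingQuot.mkAlgHom (F p) (BRel p) (fP p k)

end BpOps

/-!
`B(p)` acts on `F_p⁴` by `β ↦ E₀₁ + E₂₃`, `P⁰ ↦ diag(1,0,1,1)` and `P^k ↦ 0` for `k > 0`: the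
relations hold because every Adem relation with `b > 0` only involves words containing some `P^k`
with `k ≥ b`. In this representation `βP⁰ ↦ E₂₃` and `P⁰β ↦ E₀₁ + E₂₃`, so applying the
`(0,1)`-entry to the left tensor factor and the `(2,3)`-entry to the right one gives `c₂`.
-/

namespace TensorProduct

variable {R M : Type*} [CommSemiring R] [AddCommMonoid M] [Module R M]

theorem smul_tmul_add_smul_tmul_swap_ne_zero {x y : M} (f g : M →ₗ[R] R)
    (hfx : f x = 0) (hfy : f y = 1) (hgx : g x = 1) {c₁ c₂ : R} (hc₂ : c₂ ≠ 0) :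
    c₁ • (x ⊗ₜ[R] y) + c₂ • (y ⊗ₜ[R] x) ≠ 0 := by
  intro h
  have := congrArg ((TensorProduct.lid R R).toLinearMap ∘ₗ TensorProduct.map f g) h
  simp [hfx, hfy, hgx] at this
  exact hc₂ this

end TensorProduct

namespace BpOps

open Matrix

variable (p : ℕ)

abbrev Mat := Matrix (Fin 4) (Fin 4) (F p)

def betaMat : Mat p := single 0 1 1 + single 2 3 1

def powMat (k : ℕ) : Mat p := if k = 0 then diagonal ![1, 0, 1, 1] else 0

def genMat : Gen → Mat p
  | .beta => betaMat p
  | .pw k => powMat p k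

def freeRep : FA p →ₐ[F p] Mat p := FreeAlgebra.lift (F p) (genMat p)

@[simp] lemma freeRep_fβ : freeRep p (fβ p) = betaMat p := by
  simp [freeRep, fβ, genMat]

@[simp] lemma freeRep_fP (k : ℕ) : freeRep p (fP p k) = powMat p k := by
  simp [freeRep, fP, genMat]

lemma betaMat_mul_self : betaMat p * betaMat p = 0 := by
  ext i j
  fin_cases i <;> fin_cases j <;> simp [betaMat, mul_apply, single]

lemma betaMat_mul_powMat_zero : betaMat p * powMat p 0 = single 2 3 1 := by
  ext i j
  fin_cases i <;> fin_cases j <;> simp [betaMat, powMat, mul_apply, single]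

lemma powMat_zero_mul_betaMat : powMat p 0 * betaMat p = betaMat p := by
  ext i j
  fin_cases i <;> fin_cases j <;> simp [betaMat, powMat, mul_apply, single]

lemma powMat_zero_mul_self : powMat p 0 * powMat p 0 = powMat p 0 := by
  simp only [powMat, if_pos, diagonal_mul_diagonal]
  congr 1
  ext i
  fin_cases i <;> simp

lemma powMat_of_ne_zero {k : ℕ} (hk : k ≠ 0) : powMat p k = 0 := if_neg hk

lemma powMat_add_sub_of_le {a b t : ℕ} (hb : b ≠ 0) (ht : t ≤ a) : powMat p (a + b - t) = 0 :=
  powMat_of_ne_zero p (by omega)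

lemma le_of_mem_range_div_add_one {a t : ℕ} (ht : t ∈ Finset.range (a / p + 1)) : t ≤ a :=
  (Nat.lt_succ_iff.mp (Finset.mem_range.mp ht)).trans (Nat.div_le_self a p)

lemma Bc_zero_zero_zero : Bc p 0 0 0 = 1 := by
  simp [Bc, binc]

lemma freeRep_respects_BRel ⦃x y : FA p⦄ (h : BRel p x y) : freeRep p x = freeRep p y := by
  cases h with
  | betaSq => simp [betaMat_mul_self]
  | adem a b h =>
    have hb : b ≠ 0 := by rintro rfl; simp at h
    simp only [map_mul, map_sum, map_smul, freeRep_fP, powMat_of_ne_zero p hb, mul_zero]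
    refine (Finset.sum_eq_zero fun t ht => ?_).symm
    rw [powMat_add_sub_of_le p hb (le_of_mem_range_div_add_one p ht), zero_mul, smul_zero]
  | ademBeta a b h =>
    rcases Nat.eq_zero_or_pos b with rfl | hb
    · obtain rfl : a = 0 := by omega
      simp only [Nat.zero_div, zero_add, Finset.sum_range_one, if_true, Finset.range_zero,
        Finset.sum_empty, add_zero, Bc_zero_zero_zero, one_smul, map_mul, freeRep_fP, freeRep_fβ]
      rw [← mul_assoc, powMat_zero_mul_betaMat, powMat_zero_mul_self]
    · simp only [map_mul, map_add, map_sum, map_smul, freeRep_fP, powMat_of_ne_zero p hb.ne',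
        mul_zero]
      rw [Finset.sum_eq_zero fun t ht => ?_, Finset.sum_eq_zero fun t ht => ?_, add_zero]
      · have ha : a ≠ 0 := by rintro rfl; simp at ht
        rw [if_neg ha] at ht
        have hta : t ≤ a := (le_of_mem_range_div_add_one p ht).trans (Nat.sub_le a 1)
        rw [powMat_add_sub_of_le p hb.ne' hta, zero_mul, smul_zero]
      · rw [powMat_add_sub_of_le p hb.ne' (le_of_mem_range_div_add_one p ht), zero_mul, mul_zero,
          smul_zero]

def rep : BAlg p →ₐ[F p] Mat p := RingQuot.liftAlgHom (F p) ⟨freeRep p, freeRep_respects_BRel p⟩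

lemma rep_gβ_mul_gP_zero : rep p (gβ p * gP p 0) = single 2 3 1 := by
  simp [rep, gβ, gP, betaMat_mul_powMat_zero]

lemma rep_gP_zero_mul_gβ : rep p (gP p 0 * gβ p) = betaMat p := by
  simp [rep, gβ, gP, powMat_zero_mul_betaMat]

end BpOps

open BpOps in
theorem tensor_combination_ne_zero_general (p : ℕ)
    (c₁ c₂ : F p) (hc₂ : c₂ ≠ 0) :
    c₁ • ((gβ p * gP p 0) ⊗ₜ[F p] (gP p 0 * gβ p)) +
      c₂ • ((gP p 0 * gβ p) ⊗ₜ[F p] (gβ p * gP p 0)) ≠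
      (0 : BAlg p ⊗[F p] BAlg p) := by
  refine TensorProduct.smul_tmul_add_smul_tmul_swap_ne_zero
    (Matrix.entryLinearMap (F p) (F p) 0 1 ∘ₗ (rep p).toLinearMap)
    (Matrix.entryLinearMap (F p) (F p) 2 3 ∘ₗ (rep p).toLinearMap) ?_ ?_ ?_ hc₂ <;>
  simp [rep_gβ_mul_gP_zero, rep_gP_zero_mul_gβ, betaMat, Matrix.single]

open BpOps in
/-- For nonzero scalars `c₁, c₂`, the element
`c₁ • (βP⁰ ⊗ P⁰β) + c₂ • (P⁰β ⊗ βP⁰)` of `B(p) ⊗ B(p)` is nonzero. -/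
theorem tensor_combination_ne_zero (p : ℕ) (hp : p.Prime) (hodd : Odd p)
    (c₁ c₂ : F p) (hc₁ : c₁ ≠ 0) (hc₂ : c₂ ≠ 0) :
    c₁ • ((gβ p * gP p 0) ⊗ₜ[F p] (gP p 0 * gβ p)) +
      c₂ • ((gP p 0 * gβ p) ⊗ₜ[F p] (gβ p * gP p 0)) ≠
      (0 : BAlg p ⊗[F p] BAlg p) :=
  tensor_combination_ne_zero_general p c₁ c₂ hc₂
end
end

section
/- In B(p), the generator P^0 is not equal to the multiplicative identity 1. -/
open scoped TensorProduct

noncomputable section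

namespace BpOps

/-- Well defined since neither side of any relation (R1)–(R3) has a constant term. -/
def augmentation (p : ℕ) : BAlg p →ₐ[F p] F p :=
  RingQuot.liftAlgHom (F p)
    ⟨FreeAlgebra.lift (F p) fun _ => 0, fun _ _ h => by cases h <;> simp [fβ, fP]⟩

@[simp]
theorem augmentation_gP (p k : ℕ) : augmentation p (gP p k) = 0 := by
  simp [augmentation, gP, fP]

end BpOps

open BpOps in
theorem P_zero_ne_one_general (p : ℕ) (hp : p.Prime) :
    gP p 0 ≠ (1 : BAlg p) := by
  have : Fact p.Prime := ⟨hp⟩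
  intro h
  simpa using congrArg (augmentation p) h

open BpOps in
/-- In `B(p)`, the generator `P^0` is not the multiplicative identity. -/
theorem P_zero_ne_one (p : ℕ) (hp : p.Prime) (hodd : Odd p) :
    gP p 0 ≠ (1 : BAlg p) :=
  P_zero_ne_one_general p hp
end
end
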